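/- arXiv:1806.00119 — 5 statements merged into one kernel-verified Lean document; each statement's English description precedes it below -/
import Mathlib

section
/- Adding a constraint derived from an inconsistency reason does not eliminate answer sets: let P be a program, D a domain with D disjoint from heads of P, and (R⁺, R⁻) an inconsistency reason of P wrt. D. Let c be the constraint ← R⁺, not R⁻ (body contains each a ∈ R⁺ positively and each a ∈ R⁻ under negation). Then for every F ⊆ D, the answer sets of P ∪ facts(F) equal the answer sets of P ∪ {c} ∪ facts(F). -/
structure Rule (Atom : Type) where
  head : Atom
  pbody : Set Atom
  nbody : Set Atom

def satRule {Atom : Type} (I : Set Atom) (r : Rule Atom) : Prop :=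
  r.pbody ⊆ I ∧ r.nbody ∩ I = ∅ → r.head ∈ I

def isModel {Atom : Type} (I : Set Atom) (P : Set (Rule Atom)) : Prop :=
  ∀ r ∈ P, satRule I r

def reduct {Atom : Type} (P : Set (Rule Atom)) (I : Set Atom) : Set (Rule Atom) :=
  {r' | ∃ r ∈ P, r.nbody ∩ I = ∅ ∧ r' = Rule.mk r.head r.pbody ∅}

def isAnswerSet {Atom : Type} (P : Set (Rule Atom)) (I : Set Atom) : Prop :=
  isModel I (reduct P I) ∧ ∀ J, isModel J (reduct P I) → I ⊆ J

def facts {Atom : Type} (F : Set Atom) : Set (Rule Atom) :=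
  {r | ∃ a ∈ F, r = Rule.mk a ∅ ∅}

/-! Adding a constraint to a program keeps exactly those answer sets that satisfy it. An answer set
`I` of `P ∪ facts F` has `I ∩ D = F`, so if it violated the constraint of the inconsistency
reason `(R⁺, R⁻)`, the instance `F` would satisfy `R⁺ ⊆ F`, `R⁻ ∩ F = ∅` and still be consistent. -/

section AnswerSets

variable {Atom : Type}

lemma reduct_union (A B : Set (Rule Atom)) (I : Set Atom) :
    reduct (A ∪ B) I = reduct A I ∪ reduct B I := by
  ext r'
  constructor
  · rintro ⟨r, hr | hr, hn, he⟩
    · exact Or.inl ⟨r, hr, hn, he⟩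
    · exact Or.inr ⟨r, hr, hn, he⟩
  · rintro (⟨r, hr, hn, he⟩ | ⟨r, hr, hn, he⟩)
    · exact ⟨r, Or.inl hr, hn, he⟩
    · exact ⟨r, Or.inr hr, hn, he⟩

lemma reduct_singleton_of_nbody_inter_eq_empty {r : Rule Atom} {I : Set Atom}
    (h : r.nbody ∩ I = ∅) : reduct {r} I = {⟨r.head, r.pbody, ∅⟩} := by
  ext r'
  constructor
  · rintro ⟨_, rfl, -, rfl⟩
    rfl
  · rintro rfl
    exact ⟨r, rfl, h, rfl⟩

lemma reduct_singleton_of_nbody_inter_ne_empty {r : Rule Atom} {I : Set Atom}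
    (h : r.nbody ∩ I ≠ ∅) : reduct {r} I = ∅ :=
  Set.eq_empty_of_forall_notMem fun _ ⟨_, hr, hn, _⟩ => h (Set.mem_singleton_iff.mp hr ▸ hn)

lemma isModel_union {I : Set Atom} {A B : Set (Rule Atom)} :
    isModel I (A ∪ B) ↔ isModel I A ∧ isModel I B := by
  simp only [isModel, Set.mem_union, or_imp, forall_and]

lemma isModel_singleton {I : Set Atom} {r : Rule Atom} : isModel I {r} ↔ satRule I r := by
  simp only [isModel, Set.mem_singleton_iff, forall_eq]

lemma isModel_reduct_inter {S : Set (Rule Atom)} {K I J : Set Atom}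
    (hI : isModel I (reduct S K)) (hJ : isModel J (reduct S K)) :
    isModel (I ∩ J) (reduct S K) := by
  rintro _ ⟨r, hr, hn, rfl⟩ ⟨hp, -⟩
  exact ⟨hI _ ⟨r, hr, hn, rfl⟩ ⟨fun x hx => (hp hx).1, by simp⟩,
    hJ _ ⟨r, hr, hn, rfl⟩ ⟨fun x hx => (hp hx).2, by simp⟩⟩

/-- Supportedness: otherwise `I \ {a}` would be a smaller model of the reduct. -/
lemma isAnswerSet.exists_rule_head_eq {S : Set (Rule Atom)} {I : Set Atom}
    (h : isAnswerSet S I) {a : Atom} (ha : a ∈ I) :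
    ∃ r ∈ S, r.head = a ∧ r.nbody ∩ I = ∅ := by
  by_contra hc
  push Not at hc
  have hm : isModel (I \ {a}) (reduct S I) := by
    rintro _ ⟨r, hr, hn, rfl⟩ ⟨hp, -⟩
    have hhead : r.head ∈ I :=
      h.1 ⟨r.head, r.pbody, ∅⟩ ⟨r, hr, hn, rfl⟩ ⟨fun x hx => (hp hx).1, Set.empty_inter I⟩
    exact ⟨hhead, fun he => (hc r hr (Set.mem_singleton_iff.mp he)).ne_empty hn⟩
  exact (h.2 _ hm ha).2 rfl

lemma isAnswerSet.subset_of_facts {P : Set (Rule Atom)} {F I : Set Atom}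
    (h : isAnswerSet (P ∪ facts F) I) : F ⊆ I := fun a ha =>
  h.1 _ ⟨⟨a, ∅, ∅⟩, Or.inr ⟨a, ha, rfl⟩, Set.empty_inter I, rfl⟩
    ⟨Set.empty_subset I, Set.empty_inter I⟩

lemma isAnswerSet.inter_eq_facts {P : Set (Rule Atom)} {D F I : Set Atom}
    (hHD : ∀ r ∈ P, r.head ∉ D) (hF : F ⊆ D) (h : isAnswerSet (P ∪ facts F) I) :
    I ∩ D = F := by
  refine subset_antisymm ?_ fun a ha => ⟨h.subset_of_facts ha, hF ha⟩
  rintro a ⟨haI, haD⟩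
  obtain ⟨r, hr | ⟨b, hb, rfl⟩, rfl, -⟩ := h.exists_rule_head_eq haI
  · exact absurd haD (hHD r hr)
  · exact hb

/-- A rule `a ← B⁺, not B⁻` with `a ∈ B⁻` acts as the constraint `← B⁺, not (B⁻ \ {a})`: when
its reduct is present, `a ∉ I`, so the reduct can be satisfied below `I` only vacuously. -/
lemma isAnswerSet_union_singleton_iff {S : Set (Rule Atom)} {r : Rule Atom} {I : Set Atom}
    (hr : r.head ∈ r.nbody) : isAnswerSet (S ∪ {r}) I ↔ isAnswerSet S I ∧ satRule I r := by
  by_cases hn : r.nbody ∩ I = ∅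
  · have hhead : r.head ∉ I := fun hI => (Set.eq_empty_iff_forall_notMem.mp hn) _ ⟨hr, hI⟩
    have hsat : satRule I ⟨r.head, r.pbody, ∅⟩ ↔ satRule I r := by
      simp only [satRule, Set.empty_inter, hn, and_true]
    simp only [isAnswerSet, reduct_union, reduct_singleton_of_nbody_inter_eq_empty hn,
      isModel_union, isModel_singleton, hsat]
    constructor
    · rintro ⟨⟨hS, hrI⟩, hmin⟩
      refine ⟨⟨hS, fun J hJ => ?_⟩, hrI⟩
      have hvac : satRule (J ∩ I) ⟨r.head, r.pbody, ∅⟩ := fun ⟨hp, _⟩ =>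
        absurd (hrI ⟨fun x hx => (hp hx).2, hn⟩) hhead
      exact fun a ha => (hmin _ ⟨isModel_reduct_inter hJ hS, hvac⟩ ha).1
    · rintro ⟨⟨hS, hmin⟩, hrI⟩
      exact ⟨⟨hS, hrI⟩, fun J hJ => hmin J hJ.1⟩
  · have hsat : satRule I r := fun h => absurd h.2 hn
    simp only [isAnswerSet, reduct_union, reduct_singleton_of_nbody_inter_ne_empty hn,
      Set.union_empty, hsat, and_true]

lemma satRule_of_inconsistencyReason {P : Set (Rule Atom)} {D Rp Rm F I : Set Atom} (f : Atom)
    (hHD : ∀ r ∈ P, r.head ∉ D) (hRp : Rp ⊆ D)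
    (hIR : ∀ F, F ⊆ D → Rp ⊆ F → Rm ∩ F = ∅ → ¬ ∃ I, isAnswerSet (P ∪ facts F) I)
    (hF : F ⊆ D) (h : isAnswerSet (P ∪ facts F) I) : satRule I ⟨f, Rp, Rm ∪ {f}⟩ := by
  rintro ⟨hRpI, hRmI⟩
  have hID := h.inter_eq_facts hHD hF
  refine absurd ⟨I, h⟩ (hIR F hF ?_ ?_)
  · exact hID ▸ fun a ha => ⟨hRpI ha, hRp ha⟩
  · refine Set.eq_empty_of_subset_empty fun a ⟨haRm, haF⟩ => ?_
    exact hRmI ▸ ⟨Or.inl haRm, (hID ▸ haF).1⟩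

end AnswerSets

theorem stmt6_general {Atom : Type} (P : Set (Rule Atom)) (D Rp Rm : Set Atom) (f : Atom)
    (hHD : ∀ r ∈ P, r.head ∉ D)
    (hRp : Rp ⊆ D)
    (hIR : ∀ F, F ⊆ D → Rp ⊆ F → Rm ∩ F = ∅ → ¬ ∃ I, isAnswerSet (P ∪ facts F) I) :
    ∀ F, F ⊆ D →
      {I | isAnswerSet (P ∪ facts F) I} =
        {I | isAnswerSet (P ∪ {Rule.mk f Rp (Rm ∪ {f})} ∪ facts F) I} := by
  intro F hF
  ext I
  rw [Set.mem_ofPred_eq, Set.mem_ofPred_eq, Set.union_right_comm,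
    isAnswerSet_union_singleton_iff (r := ⟨f, Rp, Rm ∪ {f}⟩) (Or.inr rfl)]
  exact ⟨fun h => ⟨h, satRule_of_inconsistencyReason f hHD hRp hIR hF h⟩, And.left⟩

theorem stmt6 {Atom : Type} (P : Set (Rule Atom)) (D Rp Rm : Set Atom) (f : Atom)
    (hHD : ∀ r ∈ P, r.head ∉ D)
    (hRp : Rp ⊆ D) (hRm : Rm ⊆ D) (hdisj : Rp ∩ Rm = ∅)
    (hIR : ∀ F, F ⊆ D → Rp ⊆ F → Rm ∩ F = ∅ → ¬ ∃ I, isAnswerSet (P ∪ facts F) I)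
    (hfP : ∀ r ∈ P, r.head ≠ f ∧ f ∉ r.pbody ∧ f ∉ r.nbody) (hfD : f ∉ D) :
    ∀ F, F ⊆ D →
      {I | isAnswerSet (P ∪ facts F) I} =
        {I | isAnswerSet (P ∪ {Rule.mk f Rp (Rm ∪ {f})} ∪ facts F) I} :=
  stmt6_general P D Rp Rm f hHD hRp hIR
end

section
/- Let P be a normal propositional program whose set of head atoms is disjoint from a domain D, and let (R⁺, R⁻) be a pair of disjoint subsets of D. If for every classical model M of P, either R⁺ ⊄ M or R⁻ ∩ M ≠ ∅, then (R⁺, R⁻) is an inconsistency reason of P wrt. D. -/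
section AnswerSets

variable {Atom : Type} {P Q : Set (Rule Atom)} {I : Set Atom}

theorem isModel.mono (hPQ : Q ⊆ P) (hI : isModel I P) : isModel I Q :=
  fun r hr => hI r (hPQ hr)

theorem isModel_facts_iff {F : Set Atom} : isModel I (facts F) ↔ F ⊆ I := by
  constructor
  · intro hI a ha
    exact hI _ ⟨a, ha, rfl⟩ ⟨Set.empty_subset I, Set.empty_inter I⟩
  · rintro hFI _ ⟨a, ha, rfl⟩ -
    exact hFI ha

theorem isModel_of_isModel_reduct (hI : isModel I (reduct P I)) : isModel I P := by
  intro r hr ⟨hpos, hneg⟩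
  exact hI ⟨r.head, r.pbody, ∅⟩ ⟨r, hr, hneg, rfl⟩ ⟨hpos, Set.empty_inter I⟩

theorem isModel_of_isAnswerSet (hI : isAnswerSet P I) : isModel I P :=
  isModel_of_isModel_reduct hI.1

theorem isAnswerSet.disjoint_of_forall_head_notMem {S : Set Atom} (hI : isAnswerSet P I)
    (hS : ∀ r ∈ P, r.head ∉ S) : Disjoint I S := by
  have hmodel : isModel (I \ S) (reduct P I) := by
    rintro _ ⟨r, hr, hneg, rfl⟩ ⟨hpos, -⟩
    refine ⟨hI.1 ⟨r.head, r.pbody, ∅⟩ ⟨r, hr, hneg, rfl⟩ ?_, hS r hr⟩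
    exact ⟨hpos.trans Set.sdiff_subset, Set.empty_inter I⟩
  exact Set.subset_sdiff.mp (hI.2 _ hmodel) |>.2

theorem isAnswerSet.inter_eq_of_union_facts {D F : Set Atom} (hI : isAnswerSet (P ∪ facts F) I)
    (hPD : ∀ r ∈ P, r.head ∉ D) (hFD : F ⊆ D) : I ∩ D = F := by
  have hFI : F ⊆ I :=
    isModel_facts_iff.mp ((isModel_of_isAnswerSet hI).mono Set.subset_union_right)
  have hheads : ∀ r ∈ P ∪ facts F, r.head ∉ D \ F := by
    rintro r (hr | ⟨a, ha, rfl⟩) hmem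
    · exact hPD r hr hmem.1
    · exact hmem.2 ha
  have hdisj := hI.disjoint_of_forall_head_notMem hheads
  refine subset_antisymm (fun a ⟨haI, haD⟩ => ?_) (Set.subset_inter hFI hFD)
  by_contra haF
  exact Set.disjoint_left.mp hdisj haI ⟨haD, haF⟩

end AnswerSets

theorem stmt7_general {Atom : Type} (P : Set (Rule Atom)) (D Rp Rm : Set Atom)
    (hHD : ∀ r ∈ P, r.head ∉ D)
    (hRm : Rm ⊆ D)
    (h : ∀ M, isModel M P → ¬ Rp ⊆ M ∨ (Rm ∩ M).Nonempty) :
    ∀ F, F ⊆ D → Rp ⊆ F → Rm ∩ F = ∅ →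
      ¬ ∃ I, isAnswerSet (P ∪ facts F) I := by
  rintro F hFD hRpF hRmF ⟨I, hI⟩
  have hIP : isModel I P := (isModel_of_isAnswerSet hI).mono Set.subset_union_left
  have hID : I ∩ D = F := hI.inter_eq_of_union_facts hHD hFD
  rcases h I hIP with hRpI | ⟨a, haRm, haI⟩
  · exact hRpI (hRpF.trans (hID ▸ Set.inter_subset_left))
  · have haF : a ∈ F := hID ▸ ⟨haI, hRm haRm⟩
    exact Set.eq_empty_iff_forall_notMem.mp hRmF a ⟨haRm, haF⟩

theorem stmt7 {Atom : Type} (P : Set (Rule Atom)) (D Rp Rm : Set Atom)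
    (hHD : ∀ r ∈ P, r.head ∉ D)
    (hRp : Rp ⊆ D) (hRm : Rm ⊆ D) (hdisj : Rp ∩ Rm = ∅)
    (h : ∀ M, isModel M P → ¬ Rp ⊆ M ∨ (Rm ∩ M).Nonempty) :
    ∀ F, F ⊆ D → Rp ⊆ F → Rm ∩ F = ∅ →
      ¬ ∃ I, isAnswerSet (P ∪ facts F) I :=
  stmt7_general P D Rp Rm hHD hRm h
end

section
/- Characterization of answer sets via unfounded sets (Faber's theorem, propositional normal case): a classical model M of a normal propositional program P is an answer set of P if and only if M is unfounded-free, i.e., M ∩ U = ∅ for every unfounded set U of P wrt. M. -/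
def isUnfounded {Atom : Type} (P : Set (Rule Atom)) (M U : Set Atom) : Prop :=
  ∀ r ∈ P, r.head ∈ U →
    ((∃ b ∈ r.pbody, b ∉ M) ∨ (∃ b ∈ r.nbody, b ∈ M) ∨ (∃ b ∈ r.pbody, b ∉ M \ U))

theorem stmt9 {Atom : Type} (P : Set (Rule Atom)) (M : Set Atom)
    (hM : isModel M P) :
    isAnswerSet P M ↔ ∀ U, isUnfounded P M U → M ∩ U = ∅ := by
  constructor
  · rintro ⟨_, hmin⟩ U hU
    -- M \ U is a model of the reduct
    have hJ : isModel (M \ U) (reduct P M) := by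
      rintro r' ⟨r, hrP, hnb, rfl⟩
      rintro ⟨hpb, -⟩
      have hhead : r.head ∈ M := hM r hrP ⟨fun b hb => (hpb hb).1, hnb⟩
      have hnotU : r.head ∉ U := by
        intro hin
        rcases hU r hrP hin with ⟨b, hb, hnM⟩ | ⟨b, hb, hbM⟩ | ⟨b, hb, hnMU⟩
        · exact hnM (hpb hb).1
        · exact absurd hnb (by intro h; exact absurd h (by
            intro h'; have : b ∈ r.nbody ∩ M := ⟨hb, hbM⟩; rw [h'] at this; exact this))
        · exact hnMU (hpb hb)
      exact ⟨hhead, hnotU⟩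
    have := hmin _ hJ
    ext x
    simp only [Set.mem_inter_iff, Set.mem_empty_iff_false, iff_false]
    rintro ⟨hxM, hxU⟩
    exact (this hxM).2 hxU
  · intro hUF
    have hMred : isModel M (reduct P M) := by
      rintro r' ⟨r, hrP, hnb, rfl⟩
      rintro ⟨hpb, -⟩
      exact hM r hrP ⟨hpb, hnb⟩
    refine ⟨hMred, fun J hJ => ?_⟩
    have hunf : isUnfounded P M (M \ J) := by
      intro r hrP hhead
      by_cases hnb : r.nbody ∩ M = ∅
      · by_cases hpb : r.pbody ⊆ J
        · exact absurd (hJ _ ⟨r, hrP, hnb, rfl⟩ ⟨hpb, by simp⟩) hhead.2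
        · obtain ⟨b, hb, hbJ⟩ := Set.not_subset.mp hpb
          by_cases hbM : b ∈ M
          · exact Or.inr (Or.inr ⟨b, hb, fun h => h.2 ⟨hbM, hbJ⟩⟩)
          · exact Or.inl ⟨b, hb, hbM⟩
      · obtain ⟨b, hb⟩ := Set.nonempty_iff_ne_empty.mpr hnb
        exact Or.inr (Or.inl ⟨b, hb.1, hb.2⟩)
    intro x hxM
    by_contra hxJ
    have hmem : x ∈ M ∩ (M \ J) := ⟨hxM, hxM, hxJ⟩
    rw [hUF _ hunf] at hmem
    exact hmem
end

section
/- A pair of disjoint subsets (R⁺, R⁻) of a domain D (with D disjoint from heads of P) is an inconsistency reason of a normal propositional program P wrt. D if and only if for every classical model M of P, either (i) R⁺ ⊄ M, or (ii) there exists a nonempty unfounded set U of P wrt. M such that U ∩ M ≠ ∅ and U ∩ (D \ R⁻) = ∅. -/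
/-!
An answer set is exactly a classical model that no unfounded set meets: a model `K` of the
reduct below `M` yields the unfounded set `M \ K`, and conversely removing an unfounded set from
a model of the reduct leaves a model of the reduct. Adding facts `F` only forbids unfounded sets
from meeting `F`, so taking `F = M ∩ H` characterises inconsistency under all facts from `H`.
The inconsistency reason `(R⁺, R⁻)` is the case `H = D \ R⁻` for the program `P ∪ facts R⁺`.
-/

variable {Atom : Type}

section Models

variable {P Q : Set (Rule Atom)} {F I : Set Atom}

lemma isModel_union_s10 : isModel I (P ∪ Q) ↔ isModel I P ∧ isModel I Q := by
  simp only [isModel, Set.mem_union, or_imp, forall_and]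

lemma isModel_facts : isModel I (facts F) ↔ F ⊆ I := by
  constructor
  · intro h a ha
    exact h _ ⟨a, ha, rfl⟩ ⟨Set.empty_subset I, Set.empty_inter I⟩
  · rintro h _ ⟨a, ha, rfl⟩ -
    exact h ha

lemma facts_union (F G : Set Atom) : facts (F ∪ G) = facts F ∪ facts G := by
  ext r
  simp only [facts, Set.mem_ofPred_eq, Set.mem_union, or_and_right, exists_or]

lemma isModel_reduct_self : isModel I (reduct P I) ↔ isModel I P := by
  constructor
  · rintro h r hr ⟨hpb, hnb⟩
    exact h ⟨r.head, r.pbody, ∅⟩ ⟨r, hr, hnb, rfl⟩ ⟨hpb, Set.empty_inter I⟩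
  · rintro h _ ⟨r, hr, hnb, rfl⟩ ⟨hpb, -⟩
    exact h r hr ⟨hpb, hnb⟩

end Models

section Unfounded

variable {P Q : Set (Rule Atom)} {F M U K : Set Atom}

lemma isUnfounded_union :
    isUnfounded (P ∪ Q) M U ↔ isUnfounded P M U ∧ isUnfounded Q M U := by
  simp only [isUnfounded, Set.mem_union, or_imp, forall_and]

lemma isUnfounded_facts : isUnfounded (facts F) M U ↔ U ∩ F = ∅ := by
  constructor
  · intro h
    refine Set.eq_empty_iff_forall_notMem.mpr fun a ⟨haU, haF⟩ => ?_
    rcases h _ ⟨a, haF, rfl⟩ haU with ⟨b, hb, -⟩ | ⟨b, hb, -⟩ | ⟨b, hb, -⟩ <;>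
      exact Set.notMem_empty b hb
  · rintro h _ ⟨a, haF, rfl⟩ haU
    exact (Set.eq_empty_iff_forall_notMem.mp h a ⟨haU, haF⟩).elim

lemma isUnfounded.inter_self (hU : isUnfounded P M U) : isUnfounded P M (U ∩ M) := by
  intro r hr hhead
  rcases hU r hr hhead.1 with h | h | ⟨b, hb, hbU⟩
  · exact Or.inl h
  · exact Or.inr (Or.inl h)
  · by_cases hbM : b ∈ M
    · exact Or.inr (Or.inr ⟨b, hb, fun h => h.2 ⟨of_not_not fun h' => hbU ⟨hbM, h'⟩, hbM⟩⟩)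
    · exact Or.inl ⟨b, hb, hbM⟩

lemma isUnfounded_diff_of_isModel_reduct (hK : isModel K (reduct P M)) :
    isUnfounded P M (M \ K) := by
  intro r hr hhead
  by_contra! hfounded
  obtain ⟨hpbM, hnbM, hpbK⟩ := hfounded
  have hnb : r.nbody ∩ M = ∅ := Set.eq_empty_iff_forall_notMem.mpr fun b hb => hnbM b hb.1 hb.2
  have hpb : r.pbody ⊆ K := fun b hb => by simpa [hpbM b hb] using hpbK b hb
  exact hhead.2 (hK ⟨r.head, r.pbody, ∅⟩ ⟨r, hr, hnb, rfl⟩ ⟨hpb, Set.empty_inter K⟩)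

lemma isModel_reduct_diff_of_isUnfounded (hM : isModel M (reduct P M))
    (hU : isUnfounded P M U) : isModel (M \ U) (reduct P M) := by
  rintro _ ⟨r, hr, hnb, rfl⟩ ⟨hpb, -⟩
  refine ⟨hM _ ⟨r, hr, hnb, rfl⟩ ⟨fun b hb => (hpb hb).1, Set.empty_inter M⟩, fun hhead => ?_⟩
  rcases hU r hr hhead with ⟨b, hb, hbM⟩ | ⟨b, hb, hbM⟩ | ⟨b, hb, hbMU⟩
  · exact hbM (hpb hb).1
  · exact Set.eq_empty_iff_forall_notMem.mp hnb b ⟨hb, hbM⟩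
  · exact hbMU (hpb hb)

end Unfounded

theorem isAnswerSet_iff {P : Set (Rule Atom)} {M : Set Atom} :
    isAnswerSet P M ↔ isModel M P ∧ ∀ U, isUnfounded P M U → U ∩ M = ∅ := by
  rw [isAnswerSet, isModel_reduct_self]
  constructor
  · rintro ⟨hM, hmin⟩
    refine ⟨hM, fun U hU => ?_⟩
    have hsub := hmin _ (isModel_reduct_diff_of_isUnfounded (isModel_reduct_self.mpr hM) hU)
    exact Set.eq_empty_iff_forall_notMem.mpr fun a ha => (hsub ha.2).2 ha.1
  · rintro ⟨hM, hnone⟩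
    refine ⟨hM, fun K hK a haM => of_not_not fun haK => ?_⟩
    have h := hnone _ (isUnfounded_diff_of_isModel_reduct hK)
    exact Set.eq_empty_iff_forall_notMem.mp h a ⟨⟨haM, haK⟩, haM⟩

theorem isAnswerSet_union_facts_iff {P : Set (Rule Atom)} {F M : Set Atom} :
    isAnswerSet (P ∪ facts F) M ↔
      isModel M P ∧ F ⊆ M ∧ ∀ U, isUnfounded P M U → U ∩ F = ∅ → U ∩ M = ∅ := by
  simp only [isAnswerSet_iff, isModel_union_s10, isModel_facts, isUnfounded_union,
    isUnfounded_facts, and_imp, and_assoc]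

theorem forall_not_isAnswerSet_union_facts_iff (P : Set (Rule Atom)) (H : Set Atom) :
    (∀ F ⊆ H, ∀ I, ¬ isAnswerSet (P ∪ facts F) I) ↔
      ∀ M, isModel M P → ∃ U, isUnfounded P M U ∧ (U ∩ M).Nonempty ∧ U ∩ H = ∅ := by
  simp only [isAnswerSet_union_facts_iff]
  constructor
  · intro hincons M hM
    have := hincons (M ∩ H) Set.inter_subset_right M
    push Not at this
    obtain ⟨U, hU, hUMH, hUM⟩ := this hM Set.inter_subset_left
    -- `U` only avoids `M ∩ H`; its part inside `M` avoids all of `H`.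
    refine ⟨U ∩ M, hU.inter_self, by rwa [Set.inter_assoc, Set.inter_self], ?_⟩
    rwa [Set.inter_assoc]
  · rintro hunf F hFH I ⟨hI, -, hmin⟩
    obtain ⟨U, hU, hUI, hUH⟩ := hunf I hI
    refine hUI.ne_empty (hmin U hU ?_)
    exact Set.subset_eq_empty (Set.inter_subset_inter_right U hFH) hUH

theorem forall_not_isAnswerSet_of_superset_iff {P : Set (Rule Atom)} {D Rp Rm : Set Atom}
    (hRp : Rp ⊆ D \ Rm) :
    (∀ F, F ⊆ D → Rp ⊆ F → Rm ∩ F = ∅ → ¬ ∃ I, isAnswerSet (P ∪ facts F) I) ↔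
      ∀ G ⊆ D \ Rm, ∀ I, ¬ isAnswerSet (P ∪ facts Rp ∪ facts G) I := by
  simp only [not_exists, Set.union_assoc, ← facts_union]
  constructor
  · intro h G hG
    have hRpG := Set.subset_sdiff.mp (Set.union_subset hRp hG)
    exact h (Rp ∪ G) hRpG.1 Set.subset_union_left
      (Set.disjoint_iff_inter_eq_empty.mp hRpG.2.symm)
  · intro h F hFD hRpF hRmF
    have hF : F ⊆ D \ Rm :=
      Set.subset_sdiff.mpr ⟨hFD, (Set.disjoint_iff_inter_eq_empty.mpr hRmF).symm⟩
    simpa only [Set.union_eq_self_of_subset_left hRpF] using h F hF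

theorem stmt10_general {Atom : Type} (P : Set (Rule Atom)) (D Rp Rm : Set Atom)
    (hRp : Rp ⊆ D) (hdisj : Rp ∩ Rm = ∅) :
    (∀ F, F ⊆ D → Rp ⊆ F → Rm ∩ F = ∅ → ¬ ∃ I, isAnswerSet (P ∪ facts F) I) ↔
      ∀ M, isModel M P →
        (¬ Rp ⊆ M ∨ ∃ U : Set Atom, U.Nonempty ∧ isUnfounded P M U ∧
           (U ∩ M).Nonempty ∧ U ∩ (D \ Rm) = ∅) := by
  have hRpH : Rp ⊆ D \ Rm :=
    Set.subset_sdiff.mpr ⟨hRp, Set.disjoint_iff_inter_eq_empty.mpr hdisj⟩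
  rw [forall_not_isAnswerSet_of_superset_iff hRpH, forall_not_isAnswerSet_union_facts_iff]
  refine forall_congr' fun M => ?_
  rw [isModel_union_s10, isModel_facts, and_imp]
  constructor
  · intro h hM
    by_cases hRpM : Rp ⊆ M
    · obtain ⟨U, hU, hUM, hUH⟩ := h hM hRpM
      exact Or.inr ⟨U, hUM.mono Set.inter_subset_left, (isUnfounded_union.mp hU).1, hUM, hUH⟩
    · exact Or.inl hRpM
  · intro h hM hRpM
    obtain ⟨U, -, hU, hUM, hUH⟩ := (h hM).resolve_left (not_not.mpr hRpM)
    have hURp : U ∩ Rp = ∅ := Set.subset_eq_empty (Set.inter_subset_inter_right U hRpH) hUH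
    exact ⟨U, isUnfounded_union.mpr ⟨hU, isUnfounded_facts.mpr hURp⟩, hUM, hUH⟩

theorem stmt10 {Atom : Type} (P : Set (Rule Atom)) (D Rp Rm : Set Atom)
    (hHD : ∀ r ∈ P, r.head ∉ D)
    (hRp : Rp ⊆ D) (hRm : Rm ⊆ D) (hdisj : Rp ∩ Rm = ∅) :
    (∀ F, F ⊆ D → Rp ⊆ F → Rm ∩ F = ∅ → ¬ ∃ I, isAnswerSet (P ∪ facts F) I) ↔
      ∀ M, isModel M P →
        (¬ Rp ⊆ M ∨ ∃ U : Set Atom, U.Nonempty ∧ isUnfounded P M U ∧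
           (U ∩ M).Nonempty ∧ U ∩ (D \ Rm) = ∅) :=
  stmt10_general P D Rp Rm hRp hdisj
end

section
/- Atom-renaming with a one-directional bridge preserves answer sets: let P be a ground normal program, P_s ⊆ P a subprogram, a an atom, and a' a fresh atom. Define P' = P_s ∪ { a ← a' } ∪ { r with a replaced by a' in its head | r ∈ P \ P_s }. Then the answer sets of P' and of P coincide modulo the atom a' (i.e., projecting answer sets of P' to the original atoms gives exactly the answer sets of P, provided a' does not occur in any rule body of P). -/
/-!
An answer set is the least model of its own reduct. Since `a'` occurs in no negative body, the
reduct of `P'` by `I'` depends only on `I' \ {a'}`, and the models of the two reducts correspond: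
deleting `a'` turns a model of the reduct of `P'` into one of the reduct of `P`, and a model of
the reduct of `P` becomes one of the reduct of `P'` once `a'` is made true exactly when a renamed
rule fires. Both maps are monotone and each composite lies below the identity on models, so they
carry least models to least models.
-/

open Set

theorem IsLeast.apply_of_mapsTo {α β : Type*} [Preorder α] [Preorder β] {S : Set α}
    {T : Set β} {f : α → β} {g : β → α} (hf : Monotone f) (hfST : MapsTo f S T)
    (hgTS : MapsTo g T S) (hfg : ∀ y ∈ T, f (g y) ≤ y) {x : α} (hx : IsLeast S x) :
    IsLeast T (f x) :=
  ⟨hfST hx.1, fun y hy => (hf (hx.2 (hgTS hy))).trans (hfg y hy)⟩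

section Reduct

variable {Atom : Type} {P Ps : Set (Rule Atom)} {a a' : Atom} {I J : Set Atom}

theorem isAnswerSet_iff_isLeast :
    isAnswerSet P I ↔ IsLeast {J | isModel J (reduct P I)} I :=
  Iff.rfl

theorem isModel_reduct_iff :
    isModel J (reduct P I) ↔ ∀ r ∈ P, r.nbody ∩ I = ∅ → r.pbody ⊆ J → r.head ∈ J := by
  constructor
  · intro h r hr hn hp
    exact h ⟨r.head, r.pbody, ∅⟩ ⟨r, hr, hn, rfl⟩ ⟨hp, empty_inter J⟩
  · rintro h _ ⟨r, hr, hn, rfl⟩ ⟨hp, -⟩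
    exact h r hr hn hp

theorem reduct_sdiff_singleton (hnb : ∀ r ∈ P, a' ∉ r.nbody) :
    reduct P (I \ {a'}) = reduct P I := by
  have hinter : ∀ r ∈ P, r.nbody ∩ (I \ {a'}) = r.nbody ∩ I := fun r hr => by
    rw [← inter_sdiff_assoc, sdiff_singleton_eq_self fun h => hnb r hr h.1]
  ext r'
  exact exists_congr fun r => and_congr_right fun hr => by rw [hinter r hr]

/-- `a'` holds exactly when one of the renamed rules fires in `J`. -/
def addFreshHead (P Ps : Set (Rule Atom)) (a a' : Atom) (I J : Set Atom) : Set Atom :=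
  J \ {a'} ∪ {x | x = a' ∧ ∃ r ∈ P \ Ps, r.head = a ∧ r.nbody ∩ I = ∅ ∧ r.pbody ⊆ J}

theorem monotone_addFreshHead : Monotone (addFreshHead P Ps a a' I) := by
  intro J K hJK
  exact union_subset_union (sdiff_subset_sdiff_left hJK)
    fun x ⟨hx, r, hr, hra, hn, hp⟩ => ⟨hx, r, hr, hra, hn, hp.trans hJK⟩

theorem sdiff_singleton_addFreshHead_subset : addFreshHead P Ps a a' I J \ {a'} ⊆ J := by
  rintro x ⟨⟨hx, -⟩ | ⟨rfl, -⟩, hx'⟩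
  · exact hx
  · exact absurd rfl hx'

theorem subset_of_subset_addFreshHead {B : Set Atom} (hB : a' ∉ B)
    (h : B ⊆ addFreshHead P Ps a a' I J) : B ⊆ J := by
  intro x hx
  rcases h hx with ⟨hJ, -⟩ | ⟨rfl, -⟩
  · exact hJ
  · exact absurd hx hB

end Reduct

section Split

variable {Atom : Type} [DecidableEq Atom] {P Ps : Set (Rule Atom)} {a a' : Atom}
  {I J J' : Set Atom}

def splitProgram (P Ps : Set (Rule Atom)) (a a' : Atom) : Set (Rule Atom) :=
  Ps ∪ {Rule.mk a {a'} ∅}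
    ∪ {r' | ∃ r ∈ P \ Ps, r' = Rule.mk (if r.head = a then a' else r.head) r.pbody r.nbody}

theorem isModel_reduct_splitProgram_iff :
    isModel J (reduct (splitProgram P Ps a a') I) ↔
      (∀ r ∈ Ps, r.nbody ∩ I = ∅ → r.pbody ⊆ J → r.head ∈ J) ∧ (a' ∈ J → a ∈ J) ∧
      ∀ r ∈ P \ Ps, r.nbody ∩ I = ∅ → r.pbody ⊆ J →
        (if r.head = a then a' else r.head) ∈ J := by
  simp only [isModel_reduct_iff, splitProgram, mem_union, mem_singleton_iff, mem_ofPred_eq, or_imp,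
    forall_and, forall_eq, forall_exists_index, and_imp, and_assoc, mem_sdiff]
  refine and_congr_right fun _ => and_congr (by simp) ⟨fun h r hr hrPs => h _ r hr hrPs rfl, ?_⟩
  rintro h _ r hr hrPs rfl
  exact h r hr hrPs

theorem reduct_splitProgram_sdiff_singleton (hPs : Ps ⊆ P) (hnb : ∀ r ∈ P, a' ∉ r.nbody) :
    reduct (splitProgram P Ps a a') (I \ {a'}) = reduct (splitProgram P Ps a a') I := by
  refine reduct_sdiff_singleton ?_
  rintro r ((hr | rfl) | ⟨r₀, hr₀, rfl⟩)
  · exact hnb r (hPs hr)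
  · exact notMem_empty a'
  · exact hnb r₀ hr₀.1

theorem mapsTo_addFreshHead (hPs : Ps ⊆ P) (hhead : ∀ r ∈ P, r.head ≠ a')
    (hpb : ∀ r ∈ P, a' ∉ r.pbody) :
    MapsTo (addFreshHead P Ps a a' I) {J | isModel J (reduct P I)}
      {J' | isModel J' (reduct (splitProgram P Ps a a') I)} := by
  intro J hJ
  rw [mem_ofPred_eq, isModel_reduct_iff] at hJ
  have hmem : ∀ r ∈ P, r.nbody ∩ I = ∅ → r.pbody ⊆ addFreshHead P Ps a a' I J →
      r.head ∈ J := fun r hr hn hp =>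
    hJ r hr hn (subset_of_subset_addFreshHead (hpb r hr) hp)
  refine isModel_reduct_splitProgram_iff.2 ⟨fun r hr hn hp => ?_, fun ha' => ?_,
    fun r hr hn hp => ?_⟩
  · exact Or.inl ⟨hmem r (hPs hr) hn hp, hhead r (hPs hr)⟩
  · obtain ⟨-, ha'⟩ | ⟨-, r, hr, rfl, hn, hp⟩ := ha'
    · exact absurd rfl ha'
    · exact Or.inl ⟨hJ r hr.1 hn hp, hhead r hr.1⟩
  · split_ifs with hra
    · exact Or.inr ⟨rfl, r, hr, hra, hn, subset_of_subset_addFreshHead (hpb r hr.1) hp⟩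
    · exact Or.inl ⟨hmem r hr.1 hn hp, hhead r hr.1⟩

theorem mapsTo_sdiff_singleton (hhead : ∀ r ∈ P, r.head ≠ a') :
    MapsTo (· \ {a'}) {J' | isModel J' (reduct (splitProgram P Ps a a') I)}
      {J | isModel J (reduct P I)} := by
  intro J' hJ'
  obtain ⟨hPsJ', hbridge, hrest⟩ := isModel_reduct_splitProgram_iff.1 hJ'
  refine isModel_reduct_iff.2 fun r hr hn hp => ⟨?_, hhead r hr⟩
  replace hp := hp.trans sdiff_subset
  by_cases hrPs : r ∈ Ps
  · exact hPsJ' r hrPs hn hp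
  have h := hrest r ⟨hr, hrPs⟩ hn hp
  split_ifs at h with hra
  · exact hra ▸ hbridge h
  · exact h

theorem addFreshHead_sdiff_singleton_subset
    (hJ' : isModel J' (reduct (splitProgram P Ps a a') I)) :
    addFreshHead P Ps a a' I (J' \ {a'}) ⊆ J' := by
  rintro x (⟨hx, -⟩ | ⟨rfl, r, hr, hra, hn, hp⟩)
  · exact hx.1
  · have h := (isModel_reduct_splitProgram_iff.1 hJ').2.2 r hr hn (hp.trans sdiff_subset)
    rwa [if_pos hra] at h

end Split

theorem stmt18_general {Atom : Type} [DecidableEq Atom] (P Ps : Set (Rule Atom))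
    (a a' : Atom) (hPs : Ps ⊆ P)
    (hfresh : ∀ r ∈ P, r.head ≠ a' ∧ a' ∉ r.pbody ∧ a' ∉ r.nbody) :
    ∀ I, isAnswerSet P I ↔
      ∃ I', isAnswerSet
          (Ps ∪ {Rule.mk a {a'} ∅}
             ∪ {r' | ∃ r ∈ P \ Ps,
                  r' = Rule.mk (if r.head = a then a' else r.head) r.pbody r.nbody}) I'
        ∧ I = I' \ {a'} := by
  have hhead : ∀ r ∈ P, r.head ≠ a' := fun r hr => (hfresh r hr).1
  have hpb : ∀ r ∈ P, a' ∉ r.pbody := fun r hr => (hfresh r hr).2.1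
  have hnb : ∀ r ∈ P, a' ∉ r.nbody := fun r hr => (hfresh r hr).2.2
  intro I
  change _ ↔ ∃ I', isAnswerSet (splitProgram P Ps a a') I' ∧ I = I' \ {a'}
  simp only [isAnswerSet_iff_isLeast]
  constructor
  · intro hI
    have hI' : IsLeast {J' | isModel J' (reduct (splitProgram P Ps a a') I)}
        (addFreshHead P Ps a a' I I) :=
      hI.apply_of_mapsTo monotone_addFreshHead (mapsTo_addFreshHead hPs hhead hpb)
        (mapsTo_sdiff_singleton hhead) fun _ => addFreshHead_sdiff_singleton_subset
    have hproj : addFreshHead P Ps a a' I I \ {a'} = I :=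
      sdiff_singleton_addFreshHead_subset.antisymm (hI.2 (mapsTo_sdiff_singleton hhead hI'.1))
    refine ⟨_, ?_, hproj.symm⟩
    rwa [← reduct_splitProgram_sdiff_singleton hPs hnb, hproj]
  · rintro ⟨I', hI', rfl⟩
    rw [← reduct_splitProgram_sdiff_singleton hPs hnb] at hI'
    exact hI'.apply_of_mapsTo (fun _ _ h => sdiff_subset_sdiff_left h)
      (mapsTo_sdiff_singleton hhead) (mapsTo_addFreshHead hPs hhead hpb)
      fun J _ => sdiff_singleton_addFreshHead_subset

theorem stmt18 {Atom : Type} [DecidableEq Atom] (P Ps : Set (Rule Atom))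
    (a a' : Atom) (hPs : Ps ⊆ P)
    (hfresh : ∀ r ∈ P, r.head ≠ a' ∧ a' ∉ r.pbody ∧ a' ∉ r.nbody) (hne : a' ≠ a) :
    ∀ I, isAnswerSet P I ↔
      ∃ I', isAnswerSet
          (Ps ∪ {Rule.mk a {a'} ∅}
             ∪ {r' | ∃ r ∈ P \ Ps,
                  r' = Rule.mk (if r.head = a then a' else r.head) r.pbody r.nbody}) I'
        ∧ I = I' \ {a'} :=
  stmt18_general P Ps a a' hPs hfresh
end
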